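/- For every integer k ≥ 0, the 4×4 matrix M_k with rows (−(k−2)(k+1)/(4k−2), (k−1)(k−2)(k+1)/(4k−2), (k+1)/(4k−2), −1−(k−1)(k+1)/(4k−2)); (−k, k(k+1), 1, −k−1); (k(k+3)/(4k+6), k(k+2)(k+3)/(4k+6), k/(4k+6), −1+k(k+2)/(4k+6)); (k+1, k(k+1), 1, k) has determinant det M_k = −(2k+1)²; in particular M_k is invertible for every integer k ≥ 0. -/

import Mathlib

/-
Cofactor expansion of the 4×4 determinant, after which only the denominators `4k - 2` and `4k + 6`
stand in the way of a polynomial identity; they never vanish for natural `k` since `2k ≠ 1`.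
-/

noncomputable section

/-- The matrix `M_k` whose rows are the coordinate blocks of the four explicit
eigenvectors of the linearized Stokes operator `L₀` (eigenvalues `k−1`, `k+1`,
`−k−2`, `−k`) within the invariant subspace generated by a degree-`k` spherical
harmonic. -/
def Mk (k : ℕ) : Matrix (Fin 4) (Fin 4) ℝ :=
  Matrix.of
    ![![-(((k : ℝ) - 2) * ((k : ℝ) + 1) / (4 * (k : ℝ) - 2)),
        ((k : ℝ) - 1) * ((k : ℝ) - 2) * ((k : ℝ) + 1) / (4 * (k : ℝ) - 2),
        ((k : ℝ) + 1) / (4 * (k : ℝ) - 2),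
        -1 - ((k : ℝ) - 1) * ((k : ℝ) + 1) / (4 * (k : ℝ) - 2)],
      ![-(k : ℝ), (k : ℝ) * ((k : ℝ) + 1), 1, -(k : ℝ) - 1],
      ![(k : ℝ) * ((k : ℝ) + 3) / (4 * (k : ℝ) + 6),
        (k : ℝ) * ((k : ℝ) + 2) * ((k : ℝ) + 3) / (4 * (k : ℝ) + 6),
        (k : ℝ) / (4 * (k : ℝ) + 6),
        -1 + (k : ℝ) * ((k : ℝ) + 2) / (4 * (k : ℝ) + 6)],
      ![(k : ℝ) + 1, (k : ℝ) * ((k : ℝ) + 1), 1, (k : ℝ)]]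

theorem Matrix.det_fin_four {R : Type*} [CommRing R] (A : Matrix (Fin 4) (Fin 4) R) :
    A.det =
      A 0 0 * (A 1 1 * (A 2 2 * A 3 3 - A 2 3 * A 3 2) - A 1 2 * (A 2 1 * A 3 3 - A 2 3 * A 3 1)
          + A 1 3 * (A 2 1 * A 3 2 - A 2 2 * A 3 1))
      - A 0 1 * (A 1 0 * (A 2 2 * A 3 3 - A 2 3 * A 3 2) - A 1 2 * (A 2 0 * A 3 3 - A 2 3 * A 3 0)
          + A 1 3 * (A 2 0 * A 3 2 - A 2 2 * A 3 0))
      + A 0 2 * (A 1 0 * (A 2 1 * A 3 3 - A 2 3 * A 3 1) - A 1 1 * (A 2 0 * A 3 3 - A 2 3 * A 3 0)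
          + A 1 3 * (A 2 0 * A 3 1 - A 2 1 * A 3 0))
      - A 0 3 * (A 1 0 * (A 2 1 * A 3 2 - A 2 2 * A 3 1) - A 1 1 * (A 2 0 * A 3 2 - A 2 2 * A 3 0)
          + A 1 2 * (A 2 0 * A 3 1 - A 2 1 * A 3 0)) := by
  simp only [Matrix.det_succ_row_zero, Fin.sum_univ_succ, Matrix.submatrix_apply]
  simp [Fin.succAbove, Fin.lt_def]
  ring

/- Stated as `k * 4 - 2`, the normal form in which `field_simp` looks for it. -/
lemma natCast_mul_four_sub_two_ne_zero (k : ℕ) : (k : ℝ) * 4 - 2 ≠ 0 := by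
  intro h
  have : (k : ℤ) * 2 = 1 := by exact_mod_cast (by linarith : (k : ℝ) * 2 = 1)
  omega

lemma Mk_det_eq (k : ℕ) : (Mk k).det = -(2 * (k : ℝ) + 1) ^ 2 := by
  have := natCast_mul_four_sub_two_ne_zero k
  rw [Matrix.det_fin_four]
  simp only [Mk, Matrix.of_apply, Matrix.cons_val, Matrix.cons_val_zero, Matrix.cons_val_one]
  field_simp
  ring

/-- `det M_k = −(2k+1)²`; in particular `M_k` is invertible for every `k ≥ 0`. -/
theorem Mk_det (k : ℕ) :
    (Mk k).det = -(2 * (k : ℝ) + 1) ^ 2 ∧ IsUnit (Mk k).det := by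
  rw [Mk_det_eq]
  exact ⟨rfl, IsUnit.mk0 _ (neg_ne_zero.2 (by positivity))⟩
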